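/- arXiv:1203.4124 — 2 statements merged into one kernel-verified Lean document; each statement's English description precedes it below -/
import Mathlib

section
/- Let B be a real Banach space, let T be a nonexpansive linear operator on B, let x ∈ B, let N ≥ 1 be a natural number, let α ≥ 1 be a real number, and let ε > 0 satisfy ε < 2‖x‖. Suppose there are integers N ≤ i_1 ≤ j_1 ≤ i_2 ≤ j_2 ≤ … ≤ i_s ≤ j_s ≤ αN such that ‖A_{j_u} x − A_{i_u} x‖ ≥ ε for each u = 1,…,s. Then s ≤ 4 (log α) ‖x‖ / ε, where log is the natural logarithm. In other words, the number of ε-fluctuations of (A_n x) between N and αN is at most ⌊4 (log α) ‖x‖ / ε⌋. -/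
/-!
Since `T` is nonexpansive, `n ‖A_n x − A_m x‖ ≤ 2 (n − m) ‖x‖` for `m ≤ n`, so an `ε`-fluctuation
from `i` to `j` forces `i ≤ (1 − δ) j` with `δ = ε / (2‖x‖)`. Chaining the fluctuations gives
`N ≤ (1 − δ)^s α N`, hence `s δ ≤ −s log (1 − δ) ≤ log α`.
-/

open Finset

/-- The ergodic averages `A n x = (1/n) ∑_{i<n} Tⁱ x`. -/
noncomputable def ergAvg {B : Type*} [NormedAddCommGroup B] [Module ℝ B]
    (T : B →ₗ[ℝ] B) (n : ℕ) (x : B) : B :=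
  (n : ℝ)⁻¹ • ∑ i ∈ Finset.range n, (T ^ i) x

section Nonexpansive

variable {B : Type*} [NormedAddCommGroup B] [NormedSpace ℝ B] {T : B →ₗ[ℝ] B}

lemma norm_pow_apply_le (hT : ∀ y : B, ‖T y‖ ≤ ‖y‖) (k : ℕ) (y : B) :
    ‖(T ^ k) y‖ ≤ ‖y‖ := by
  induction k with
  | zero => simp
  | succ k ih =>
    rw [pow_succ', Module.End.mul_apply]
    exact (hT _).trans ih

lemma norm_sum_Ico_pow_apply_le (hT : ∀ y : B, ‖T y‖ ≤ ‖y‖) (x : B) (a b : ℕ) :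
    ‖∑ k ∈ Ico a b, (T ^ k) x‖ ≤ ((b - a : ℕ) : ℝ) * ‖x‖ := by
  calc ‖∑ k ∈ Ico a b, (T ^ k) x‖ ≤ ∑ _k ∈ Ico a b, ‖x‖ :=
        norm_sum_le_of_le _ fun k _ => norm_pow_apply_le hT k x
    _ = ((b - a : ℕ) : ℝ) * ‖x‖ := by rw [sum_const, Nat.card_Ico, nsmul_eq_mul]

lemma mul_norm_ergAvg_sub_le (hT : ∀ y : B, ‖T y‖ ≤ ‖y‖) (x : B) {m n : ℕ}
    (hm : 0 < m) (hmn : m ≤ n) :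
    n * ‖ergAvg T n x - ergAvg T m x‖ ≤ 2 * ((n : ℝ) - m) * ‖x‖ := by
  have hm' : (0 : ℝ) < m := by exact_mod_cast hm
  have hn' : (0 : ℝ) < n := by exact_mod_cast hm.trans_le hmn
  have hmn' : (m : ℝ) ≤ n := by exact_mod_cast hmn
  have hhead : ‖∑ k ∈ range m, (T ^ k) x‖ ≤ m * ‖x‖ := by
    simpa using norm_sum_Ico_pow_apply_le hT x 0 m
  have htail : ‖∑ k ∈ Ico m n, (T ^ k) x‖ ≤ (n - m) * ‖x‖ := by
    simpa [Nat.cast_sub hmn] using norm_sum_Ico_pow_apply_le hT x m n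
  rw [ergAvg, ergAvg, ← sum_range_add_sum_Ico _ hmn]
  generalize ∑ k ∈ range m, (T ^ k) x = head at hhead ⊢
  generalize ∑ k ∈ Ico m n, (T ^ k) x = tail at htail ⊢
  -- `n A_n x = head + tail` and `n A_m x = (n / m) head`
  have hdiff : (n : ℝ) • ((n : ℝ)⁻¹ • (head + tail) - (m : ℝ)⁻¹ • head) =
      tail - ((n - m) / m : ℝ) • head := by
    rw [smul_sub, smul_smul, smul_smul, mul_inv_cancel₀ hn'.ne', one_smul, sub_div,
      div_self hm'.ne', ← div_eq_mul_inv, sub_smul, one_smul]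
    abel
  calc (n : ℝ) * ‖(n : ℝ)⁻¹ • (head + tail) - (m : ℝ)⁻¹ • head‖
      = ‖tail - ((n - m) / m : ℝ) • head‖ := by
        rw [← hdiff, norm_smul, Real.norm_natCast]
    _ ≤ ‖tail‖ + (n - m) / m * ‖head‖ := by
        refine (norm_sub_le _ _).trans_eq ?_
        rw [norm_smul, Real.norm_of_nonneg (div_nonneg (sub_nonneg.2 hmn') hm'.le)]
    _ ≤ (n - m) * ‖x‖ + (n - m) / m * (m * ‖x‖) := by
        gcongr
    _ = 2 * ((n : ℝ) - m) * ‖x‖ := by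
        field_simp
        ring

lemma cast_le_mul_of_le_norm_ergAvg_sub (hT : ∀ y : B, ‖T y‖ ≤ ‖y‖) {x : B} (hx : 0 < ‖x‖)
    {m n : ℕ} (hm : 0 < m) (hmn : m ≤ n) {ε : ℝ} (hfluc : ε ≤ ‖ergAvg T n x - ergAvg T m x‖) :
    (m : ℝ) ≤ (1 - ε / (2 * ‖x‖)) * n := by
  have hbound := mul_norm_ergAvg_sub_le hT x hm hmn
  have hεn : ε * n ≤ 2 * ((n : ℝ) - m) * ‖x‖ := by nlinarith [Nat.cast_nonneg (α := ℝ) n]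
  rw [sub_mul, one_mul, div_mul_eq_mul_div, le_sub_iff_add_le, ← le_sub_iff_add_le',
    div_le_iff₀ (by positivity)]
  linarith

end Nonexpansive

lemma le_pow_mul_of_chain {c N : ℝ} (hc : 0 ≤ c) {s : ℕ} {i j : ℕ → ℝ} (hN : N ≤ i 1)
    (hstep : ∀ u, 1 ≤ u → u ≤ s → i u ≤ c * j u)
    (hlink : ∀ u, 1 ≤ u → u < s → j u ≤ i (u + 1)) :
    ∀ u, 1 ≤ u → u ≤ s → N ≤ c ^ u * j u := by
  intro u hu
  induction u, hu using Nat.le_induction with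
  | base => simpa using fun h1s => hN.trans (hstep 1 le_rfl h1s)
  | succ v hv ih =>
    intro hvs
    calc N ≤ c ^ v * j v := ih (by omega)
      _ ≤ c ^ v * i (v + 1) := by gcongr; exact hlink v hv hvs
      _ ≤ c ^ v * (c * j (v + 1)) := by gcongr; exact hstep (v + 1) (by omega) hvs
      _ = c ^ (v + 1) * j (v + 1) := by ring

lemma mul_le_log_of_le_pow_mul {δ α N : ℝ} (hδ : δ < 1) (hN : 0 < N) {s : ℕ}
    (h : N ≤ (1 - δ) ^ s * (α * N)) : s * δ ≤ Real.log α := by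
  have hc : 0 < 1 - δ := by linarith
  have hone : 1 ≤ (1 - δ) ^ s * α := by nlinarith
  have hα : 0 < α := pos_of_mul_pos_right (one_pos.trans_le hone) (by positivity)
  have hlog : 0 ≤ s * Real.log (1 - δ) + Real.log α := by
    have := Real.log_nonneg hone
    rwa [Real.log_mul (pow_pos hc s).ne' hα.ne', Real.log_pow] at this
  have hlog_le : Real.log (1 - δ) ≤ -δ := by linarith [Real.log_le_sub_one_of_pos hc]
  nlinarith [Nat.cast_nonneg (α := ℝ) s]

/-- A small interval cannot contain many `ε`-fluctuations: if
`N ≤ i₁ ≤ j₁ ≤ … ≤ i_s ≤ j_s ≤ αN` with `‖A_{j u} x − A_{i u} x‖ ≥ ε` for each `u = 1, …, s`,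
and `0 < ε < 2‖x‖`, `α ≥ 1`, then `s ≤ 4 (log α) ‖x‖ / ε`. -/
theorem stmt12 {B : Type*} [NormedAddCommGroup B] [NormedSpace ℝ B]
    (T : B →ₗ[ℝ] B) (hT : ∀ y : B, ‖T y‖ ≤ ‖y‖) (x : B)
    (N : ℕ) (hN : 1 ≤ N) (α : ℝ) (hα : 1 ≤ α) (ε : ℝ) (hε : 0 < ε) (hε2 : ε < 2 * ‖x‖)
    (s : ℕ) (i j : ℕ → ℕ)
    (hord : ∀ u, 1 ≤ u → u ≤ s → N ≤ i u ∧ i u ≤ j u ∧ (j u : ℝ) ≤ α * N)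
    (hchain : ∀ u, 1 ≤ u → u < s → j u ≤ i (u + 1))
    (hfluc : ∀ u, 1 ≤ u → u ≤ s → ε ≤ ‖ergAvg T (j u) x - ergAvg T (i u) x‖) :
    (s : ℝ) ≤ 4 * Real.log α * ‖x‖ / ε := by
  have hx : 0 < ‖x‖ := by linarith
  have hδ : ε / (2 * ‖x‖) < 1 := (div_lt_one (by positivity)).2 hε2
  have hsδ : s * (ε / (2 * ‖x‖)) ≤ Real.log α := by
    rcases Nat.eq_zero_or_pos s with rfl | hs
    · simpa using Real.log_nonneg hα
    have hstep : ∀ u, 1 ≤ u → u ≤ s → (i u : ℝ) ≤ (1 - ε / (2 * ‖x‖)) * j u := fun u hu hus =>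
      have ⟨hNi, hij, _⟩ := hord u hu hus
      cast_le_mul_of_le_norm_ergAvg_sub hT hx (by omega) hij (hfluc u hu hus)
    have hNs : (N : ℝ) ≤ (1 - ε / (2 * ‖x‖)) ^ s * j s :=
      le_pow_mul_of_chain (i := fun u => i u) (j := fun u => j u) (by linarith)
        (by exact_mod_cast (hord 1 le_rfl hs).1) hstep
        (fun u hu hus => by exact_mod_cast hchain u hu hus) s hs le_rfl
    refine mul_le_log_of_le_pow_mul hδ (by exact_mod_cast hN) (hNs.trans ?_)
    gcongr
    exact (hord s hs le_rfl).2.2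
  rw [le_div_iff₀ hε]
  calc (s : ℝ) * ε = s * (ε / (2 * ‖x‖)) * (2 * ‖x‖) := by field_simp
    _ ≤ Real.log α * (2 * ‖x‖) := by gcongr
    _ ≤ 4 * Real.log α * ‖x‖ := by nlinarith [Real.log_nonneg hα]
end

section
/- Let B be a real normed space, let T be a nonexpansive linear operator on B, and let x ∈ B. Then for all natural numbers n ≥ 1 and k ≥ 1, ‖A_{kn} x‖ ≤ ‖A_n x‖ (since A_{kn} x = (1/k) ∑_{i<k} T^{in} (A_n x)). Consequently, if the sequence (A_n x)_{n≥1} converges to some y ∈ B, then ‖y‖ = inf_{n≥1} ‖A_n x‖. -/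
/-!
Splitting `range (k * n)` into `k` blocks of length `n` gives
`A_{kn} x = (1/k) ∑_{i<k} T^{in} (A_n x)`, an ergodic average of `A_n x` for the nonexpansive
operator `Tⁿ`, so `‖A_{kn} x‖ ≤ ‖A_n x‖`. Hence if `A_n x → y`, then for each `n` the
subsequence `A_{kn} x` shows `‖y‖ ≤ ‖A_n x‖`, while `‖A_n x‖ → ‖y‖` gives the reverse bound
on the infimum.
-/

open Finset

section PowerSums

variable {R M : Type*} [Semiring R] [AddCommMonoid M] [Module R M]

theorem sum_range_mul_pow_apply (T : M →ₗ[R] M) (k n : ℕ) (x : M) :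
    ∑ j ∈ range (k * n), (T ^ j) x = ∑ i ∈ range k, ((T ^ n) ^ i) (∑ j ∈ range n, (T ^ j) x) := by
  induction k with
  | zero => simp
  | succ k ih =>
    rw [Nat.succ_mul, sum_range_add, ih, sum_range_succ, map_sum]
    congr 1
    refine sum_congr rfl fun j _ => ?_
    rw [← Module.End.mul_apply, ← pow_mul, ← pow_add, mul_comm n k]

end PowerSums

section Nonexpansive

variable {M : Type*} [SeminormedAddCommGroup M] {R : Type*} [Semiring R] [Module R M]

theorem norm_pow_apply_le_of_norm_apply_le {T : M →ₗ[R] M} (hT : ∀ y, ‖T y‖ ≤ ‖y‖) (m : ℕ)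
    (y : M) : ‖(T ^ m) y‖ ≤ ‖y‖ := by
  induction m generalizing y with
  | zero => simp
  | succ m ih =>
    rw [pow_succ, Module.End.mul_apply]
    exact (ih (T y)).trans (hT y)

end Nonexpansive

section ErgodicAverage

variable {B : Type*} [NormedAddCommGroup B] [NormedSpace ℝ B]

theorem norm_ergAvg_le {T : B →ₗ[ℝ] B} (hT : ∀ y, ‖T y‖ ≤ ‖y‖) (n : ℕ) (x : B) :
    ‖ergAvg T n x‖ ≤ ‖x‖ := by
  rcases Nat.eq_zero_or_pos n with rfl | hn
  · simp [ergAvg]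
  have hsum : ‖∑ i ∈ range n, (T ^ i) x‖ ≤ n * ‖x‖ :=
    (norm_sum_le_of_le _ fun i _ => norm_pow_apply_le_of_norm_apply_le hT i x).trans_eq (by simp)
  rw [ergAvg, norm_smul, norm_inv, Real.norm_natCast, inv_mul_le_iff₀ (Nat.cast_pos.2 hn)]
  exact hsum

theorem ergAvg_mul (T : B →ₗ[ℝ] B) (k n : ℕ) (x : B) :
    ergAvg T (k * n) x = ergAvg (T ^ n) k (ergAvg T n x) := by
  simp only [ergAvg, map_smul, ← smul_sum, smul_smul, sum_range_mul_pow_apply, Nat.cast_mul,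
    mul_inv]

theorem norm_ergAvg_mul_le {T : B →ₗ[ℝ] B} (hT : ∀ y, ‖T y‖ ≤ ‖y‖) (k n : ℕ) (x : B) :
    ‖ergAvg T (k * n) x‖ ≤ ‖ergAvg T n x‖ := by
  rw [ergAvg_mul]
  exact norm_ergAvg_le (norm_pow_apply_le_of_norm_apply_le hT n) k _

end ErgodicAverage

open Filter Topology in
theorem Filter.Tendsto.eq_iInf_succ_of_apply_mul_le {f : ℕ → ℝ} {L : ℝ}
    (hf : Tendsto f atTop (𝓝 L)) (hmul : ∀ n k : ℕ, f (k * n) ≤ f n) :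
    L = ⨅ n : ℕ, f (n + 1) := by
  have hsucc : Tendsto (fun n => f (n + 1)) atTop (𝓝 L) := hf.comp (tendsto_add_atTop_nat 1)
  refine le_antisymm (le_ciInf fun n => ?_)
    (ge_of_tendsto' hsucc fun n => ciInf_le hsucc.bddBelow_range n)
  have hmul_n : Tendsto (fun k : ℕ => k * (n + 1)) atTop atTop :=
    tendsto_id.atTop_mul_const' (Nat.succ_pos n)
  exact le_of_tendsto' (hf.comp hmul_n) fun k => hmul (n + 1) k

/-- For a nonexpansive linear operator `T` on a real normed space: `‖A_{kn} x‖ ≤ ‖A_n x‖` for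
all `n, k ≥ 1`; consequently, if the sequence `(A_n x)_{n ≥ 1}` converges to `y`, then
`‖y‖ = inf_{n ≥ 1} ‖A_n x‖`. -/
theorem stmt16 {B : Type*} [NormedAddCommGroup B] [NormedSpace ℝ B]
    (T : B →ₗ[ℝ] B) (hT : ∀ y : B, ‖T y‖ ≤ ‖y‖) (x : B) :
    (∀ n k : ℕ, 1 ≤ n → 1 ≤ k → ‖ergAvg T (k * n) x‖ ≤ ‖ergAvg T n x‖) ∧
      ∀ y : B, Filter.Tendsto (fun n => ergAvg T n x) Filter.atTop (nhds y) →
        ‖y‖ = ⨅ n : ℕ, ‖ergAvg T (n + 1) x‖ :=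
  ⟨fun n k _ _ => norm_ergAvg_mul_le hT k n x, fun _ hy =>
    hy.norm.eq_iInf_succ_of_apply_mul_le fun n k => norm_ergAvg_mul_le hT k n x⟩
end
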